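/- Let ν > 0 and let u : ℝ × ℝ → ℝ be smooth and satisfy ∂_t u(x,t) = ν ∂_x∂_x u(x,t) − u(x,t)·∂_x u(x,t) for all (x,t) ∈ ℝ². Fix ε ∈ ℝ and let Ω_ε = {(x,t) ∈ ℝ² : 1 + εt > 0}. Then the projectively transformed function ũ(x,t) := (u(x/(1 + εt), t/(1 + εt)) + εx)/(1 + εt), defined on Ω_ε, satisfies ∂_t ũ(x,t) = ν ∂_x∂_x ũ(x,t) − ũ(x,t)·∂_x ũ(x,t) for all (x,t) ∈ Ω_ε. (The finite projective transformation generated by the fifth Burgers symmetry generator v₅ = tx∂_x + t²∂_t + (x − tu)∂_u maps solutions to solutions.) -/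

import Mathlib

/-- Partial derivative in the first (space) variable. -/
noncomputable def pdx (u : ℝ × ℝ → ℝ) : ℝ × ℝ → ℝ :=
  fun p => deriv (fun x => u (x, p.2)) p.1

/-- Partial derivative in the second (time) variable. -/
noncomputable def pdt (u : ℝ × ℝ → ℝ) : ℝ × ℝ → ℝ :=
  fun p => deriv (fun t => u (p.1, t)) p.2

lemma pair_apply (L : ℝ × ℝ →L[ℝ] ℝ) (a b : ℝ) :
    L (a, b) = a * L (1, 0) + b * L (0, 1) := by
  have h : (a, b) = a • ((1:ℝ), (0:ℝ)) + b • ((0:ℝ), (1:ℝ)) := by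
    simp [Prod.ext_iff]
  rw [h, map_add, map_smul, map_smul, smul_eq_mul, smul_eq_mul]

lemma hasDerivAt_comp2 {f : ℝ × ℝ → ℝ} {g h : ℝ → ℝ} {g' h' : ℝ} (y : ℝ)
    (hf : Differentiable ℝ f) (hg : HasDerivAt g g' y) (hh : HasDerivAt h h' y) :
    HasDerivAt (fun y' => f (g y', h y'))
      (g' * fderiv ℝ f (g y, h y) (1, 0) + h' * fderiv ℝ f (g y, h y) (0, 1)) y := by
  have h1 : HasDerivAt (fun y' => (g y', h y')) ((g', h') : ℝ × ℝ) y := hg.prodMk hh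
  have h2 := (hf (g y, h y)).hasFDerivAt.comp_hasDerivAt y h1
  rw [pair_apply (fderiv ℝ f (g y, h y)) g' h'] at h2; exact h2

lemma pdx_eq_fderiv {f : ℝ × ℝ → ℝ} (hf : Differentiable ℝ f) (p : ℝ × ℝ) :
    pdx f p = fderiv ℝ f p (1, 0) := by
  have h := hasDerivAt_comp2 p.1 hf (hasDerivAt_id p.1) (hasDerivAt_const p.1 p.2)
  simpa [pdx] using h.deriv

lemma pdt_eq_fderiv {f : ℝ × ℝ → ℝ} (hf : Differentiable ℝ f) (p : ℝ × ℝ) :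
    pdt f p = fderiv ℝ f p (0, 1) := by
  have h := hasDerivAt_comp2 p.2 hf (hasDerivAt_const p.2 p.1) (hasDerivAt_id p.2)
  simpa [pdt] using h.deriv

lemma pdx_contDiff {f : ℝ × ℝ → ℝ} (hf : ContDiff ℝ (⊤ : ℕ∞) f) : ContDiff ℝ (⊤ : ℕ∞) (pdx f) := by
  have h : ContDiff ℝ (⊤ : ℕ∞) (fun p : ℝ × ℝ => fderiv ℝ f p (1, 0)) :=
    (hf.fderiv_right (by simp)).clm_apply contDiff_const
  have he : pdx f = fun p : ℝ × ℝ => fderiv ℝ f p (1, 0) := by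
    funext p; exact pdx_eq_fderiv (hf.differentiable (by simp)) p
  rw [he]; exact h

/-- The finite projective transformation generated by the fifth Burgers symmetry
generator v₅ = tx∂ₓ + t²∂ₜ + (x − tu)∂ᵤ maps solutions to solutions on 1 + εt > 0. -/
theorem burgers_projective_symmetry (ν : ℝ) (hν : 0 < ν) (u : ℝ × ℝ → ℝ)
    (hu : ContDiff ℝ (⊤ : ℕ∞) u)
    (hburgers : ∀ x t : ℝ,
      pdt u (x, t) = ν * pdx (pdx u) (x, t) - u (x, t) * pdx u (x, t))
    (ε : ℝ) :
    ∀ x t : ℝ, 0 < 1 + ε * t →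
      pdt (fun p : ℝ × ℝ =>
          (u (p.1 / (1 + ε * p.2), p.2 / (1 + ε * p.2)) + ε * p.1) / (1 + ε * p.2)) (x, t) =
        ν * pdx (pdx (fun p : ℝ × ℝ =>
            (u (p.1 / (1 + ε * p.2), p.2 / (1 + ε * p.2)) + ε * p.1) / (1 + ε * p.2))) (x, t) -
          (fun p : ℝ × ℝ =>
              (u (p.1 / (1 + ε * p.2), p.2 / (1 + ε * p.2)) + ε * p.1) / (1 + ε * p.2)) (x, t) *
            pdx (fun p : ℝ × ℝ =>
              (u (p.1 / (1 + ε * p.2), p.2 / (1 + ε * p.2)) + ε * p.1) / (1 + ε * p.2)) (x, t) := by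
  intro x t ht
  have hs : (1 + ε * t) ≠ 0 := ne_of_gt ht
  have hud : Differentiable ℝ u := hu.differentiable (by simp)
  have hPd : Differentiable ℝ (pdx u) := (pdx_contDiff hu).differentiable (by simp)
  set U : ℝ × ℝ → ℝ := fun p : ℝ × ℝ =>
    (u (p.1 / (1 + ε * p.2), p.2 / (1 + ε * p.2)) + ε * p.1) / (1 + ε * p.2) with hU
  -- first x-derivative, along the whole line at time t
  have hpx : (fun y => pdx U (y, t)) = fun y =>
      ((1 / (1 + ε * t)) * pdx u (y / (1 + ε * t), t / (1 + ε * t)) + ε * 1) / (1 + ε * t) := by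
    funext y
    have h1 := hasDerivAt_comp2 (f := u) y hud
      ((hasDerivAt_id y).div_const (1 + ε * t)) (hasDerivAt_const y (t / (1 + ε * t)))
    have h2 : HasDerivAt
        (fun y' => (u (y' / (1 + ε * t), t / (1 + ε * t)) + ε * y') / (1 + ε * t))
        (((1 / (1 + ε * t) * fderiv ℝ u (y / (1 + ε * t), t / (1 + ε * t)) (1, 0)
            + 0 * fderiv ℝ u (y / (1 + ε * t), t / (1 + ε * t)) (0, 1)) + ε * 1)
          / (1 + ε * t)) y :=
      (h1.add ((hasDerivAt_id y).const_mul ε)).div_const (1 + ε * t)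
    show deriv (fun x' => (u (x' / (1 + ε * t), t / (1 + ε * t)) + ε * x') / (1 + ε * t)) y = _
    rw [h2.deriv, pdx_eq_fderiv hud]
    ring
  have hpx1 : pdx U (x, t) =
      ((1 / (1 + ε * t)) * pdx u (x / (1 + ε * t), t / (1 + ε * t)) + ε * 1) / (1 + ε * t) :=
    congrFun hpx x
  -- second x-derivative
  have hxx : pdx (pdx U) (x, t) =
      pdx (pdx u) (x / (1 + ε * t), t / (1 + ε * t))
        * (1 / (1 + ε * t)) * (1 / (1 + ε * t)) * (1 / (1 + ε * t)) := by
    have h1 := hasDerivAt_comp2 (f := pdx u) x hPd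
      ((hasDerivAt_id x).div_const (1 + ε * t)) (hasDerivAt_const x (t / (1 + ε * t)))
    have h2 : HasDerivAt
        (fun y => ((1 / (1 + ε * t)) * pdx u (y / (1 + ε * t), t / (1 + ε * t)) + ε * 1)
          / (1 + ε * t))
        (((1 / (1 + ε * t)) * (1 / (1 + ε * t)
            * fderiv ℝ (pdx u) (x / (1 + ε * t), t / (1 + ε * t)) (1, 0)
            + 0 * fderiv ℝ (pdx u) (x / (1 + ε * t), t / (1 + ε * t)) (0, 1)))
          / (1 + ε * t)) x :=
      ((h1.const_mul (1 / (1 + ε * t))).add_const (ε * 1)).div_const (1 + ε * t)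
    show deriv (fun y => pdx U (y, t)) x = _
    rw [hpx, h2.deriv, pdx_eq_fderiv hPd]
    ring
  -- time derivative
  have hden : HasDerivAt (fun t' : ℝ => 1 + ε * t') ε t := by
    exact ((hasDerivAt_const t (1 : ℝ)).add ((hasDerivAt_id t).const_mul ε)).congr_deriv (by simp)
  have g1 : HasDerivAt (fun t' : ℝ => x / (1 + ε * t'))
      ((0 * (1 + ε * t) - x * ε) / (1 + ε * t) ^ 2) t :=
    (hasDerivAt_const t x).div hden hs
  have g2 : HasDerivAt (fun t' : ℝ => t' / (1 + ε * t'))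
      ((1 * (1 + ε * t) - t * ε) / (1 + ε * t) ^ 2) t :=
    (hasDerivAt_id t).div hden hs
  have h1 := hasDerivAt_comp2 (f := u) t hud g1 g2
  have h2 : HasDerivAt
      (fun t' => (u (x / (1 + ε * t'), t' / (1 + ε * t')) + ε * x) / (1 + ε * t'))
      (((((0 * (1 + ε * t) - x * ε) / (1 + ε * t) ^ 2)
            * fderiv ℝ u (x / (1 + ε * t), t / (1 + ε * t)) (1, 0)
          + ((1 * (1 + ε * t) - t * ε) / (1 + ε * t) ^ 2)
            * fderiv ℝ u (x / (1 + ε * t), t / (1 + ε * t)) (0, 1)) * (1 + ε * t)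
        - (u (x / (1 + ε * t), t / (1 + ε * t)) + ε * x) * ε) / (1 + ε * t) ^ 2) t :=
    (h1.add_const (ε * x)).div hden hs
  have hpt : pdt U (x, t) =
      (((((0 * (1 + ε * t) - x * ε) / (1 + ε * t) ^ 2)
            * fderiv ℝ u (x / (1 + ε * t), t / (1 + ε * t)) (1, 0)
          + ((1 * (1 + ε * t) - t * ε) / (1 + ε * t) ^ 2)
            * fderiv ℝ u (x / (1 + ε * t), t / (1 + ε * t)) (0, 1)) * (1 + ε * t)
        - (u (x / (1 + ε * t), t / (1 + ε * t)) + ε * x) * ε) / (1 + ε * t) ^ 2) := h2.deriv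
  have hUval : U (x, t) = (u (x / (1 + ε * t), t / (1 + ε * t)) + ε * x) / (1 + ε * t) := rfl
  rw [hpt, hxx, hpx1, hUval,
    ← pdx_eq_fderiv hud (x / (1 + ε * t), t / (1 + ε * t)),
    ← pdt_eq_fderiv hud (x / (1 + ε * t), t / (1 + ε * t)),
    hburgers (x / (1 + ε * t)) (t / (1 + ε * t))]
  field_simp
  ring
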